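/- Thinning: in the annotated nested sequent calculus for GL with cuts on A, if ⊢^A Γ{◇A⊥_∅}, then ⊢^A Γ{·}; an occurrence of ◇A⊥ whose annotation set is empty (i.e., which is never used by the ◇ rule) can be deleted from the end-sequent. -/
import Mathlib


/-- Formulas of GL in negation normal form. -/
inductive Formula : Type where
  | pos : ℕ → Formula
  | neg : ℕ → Formula
  | and : Formula → Formula → Formula
  | or  : Formula → Formula → Formula
  | box : Formula → Formula
  | dia : Formula → Formula
deriving DecidableEq

/-- Negation `A⊥` of a formula, via De Morgan duality. -/
def Formula.negate : Formula → Formula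
  | .pos a => .neg a
  | .neg a => .pos a
  | .and A B => .or A.negate B.negate
  | .or A B => .and A.negate B.negate
  | .box A => .dia A.negate
  | .dia A => .box A.negate

/-- An element of a nested sequent: a formula or a nested (bracketed) sequent. -/
inductive SeqElem : Type where
  | fml : Formula → SeqElem
  | nest : List SeqElem → SeqElem

/-- A nested sequent. -/
abbrev Sequent := List SeqElem

/-- Unary contexts: a nested sequent with a single hole. -/
inductive Ctx : Type where
  | hole : Sequent → Ctx
  | nest : Sequent → Ctx → Ctx

/-- Fill the hole of a context with a sequent. -/
def Ctx.fill : Ctx → Sequent → Sequent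
  | .hole Δ, Γ => Δ ++ Γ
  | .nest Δ c, Γ => .nest (c.fill Γ) :: Δ

/-- Depth of a context: number of brackets surrounding the hole. -/
def Ctx.depth : Ctx → ℕ
  | .hole _ => 0
  | .nest _ c => c.depth + 1

/-- Equivalence of nested sequents up to (deep) exchange. -/
inductive SeqEquiv : Sequent → Sequent → Prop where
  | nil : SeqEquiv [] []
  | cons {e : SeqElem} {Γ Δ : Sequent} : SeqEquiv Γ Δ → SeqEquiv (e :: Γ) (e :: Δ)
  | consNest {Γ' Δ' Γ Δ : Sequent} :
      SeqEquiv Γ' Δ' → SeqEquiv Γ Δ → SeqEquiv (.nest Γ' :: Γ) (.nest Δ' :: Δ)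
  | swap (a b : SeqElem) (Γ : Sequent) : SeqEquiv (a :: b :: Γ) (b :: a :: Γ)
  | trans {Γ Δ Θ : Sequent} : SeqEquiv Γ Δ → SeqEquiv Δ Θ → SeqEquiv Γ Θ

/-- `DerivH n Γ`: `Γ` has a cut-free derivation of height at most `n`. -/
inductive DerivH : ℕ → Sequent → Prop where
  | id (n : ℕ) (c : Ctx) (a : ℕ) :
      DerivH n (c.fill [.fml (.pos a), .fml (.neg a)])
  | and {n : ℕ} {c : Ctx} {A B : Formula} :
      DerivH n (c.fill [.fml A]) → DerivH n (c.fill [.fml B]) →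
      DerivH (n + 1) (c.fill [.fml (.and A B)])
  | or {n : ℕ} {c : Ctx} {A B : Formula} :
      DerivH n (c.fill [.fml A, .fml B]) →
      DerivH (n + 1) (c.fill [.fml (.or A B)])
  | box {n : ℕ} {c : Ctx} {A : Formula} :
      DerivH n (c.fill [.nest [.fml (.dia A.negate), .fml A]]) →
      DerivH (n + 1) (c.fill [.fml (.box A)])
  | dia {n : ℕ} (c d : Ctx) {A : Formula} :
      0 < d.depth →
      DerivH n (c.fill (d.fill [.fml A] ++ [.fml (.dia A)])) →
      DerivH (n + 1) (c.fill (d.fill [] ++ [.fml (.dia A)]))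
  | exch {n : ℕ} {Γ Δ : Sequent} : SeqEquiv Γ Δ → DerivH n Γ → DerivH n Δ
  | up {n : ℕ} {Γ : Sequent} : DerivH n Γ → DerivH (n + 1) Γ

/-- Derivability where cut is permitted on formulas satisfying `P`. -/
inductive DerivWith (P : Formula → Prop) : Sequent → Prop where
  | id (c : Ctx) (a : ℕ) :
      DerivWith P (c.fill [.fml (.pos a), .fml (.neg a)])
  | and {c : Ctx} {A B : Formula} :
      DerivWith P (c.fill [.fml A]) → DerivWith P (c.fill [.fml B]) →
      DerivWith P (c.fill [.fml (.and A B)])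
  | or {c : Ctx} {A B : Formula} :
      DerivWith P (c.fill [.fml A, .fml B]) →
      DerivWith P (c.fill [.fml (.or A B)])
  | box {c : Ctx} {A : Formula} :
      DerivWith P (c.fill [.nest [.fml (.dia A.negate), .fml A]]) →
      DerivWith P (c.fill [.fml (.box A)])
  | dia (c d : Ctx) {A : Formula} :
      0 < d.depth →
      DerivWith P (c.fill (d.fill [.fml A] ++ [.fml (.dia A)])) →
      DerivWith P (c.fill (d.fill [] ++ [.fml (.dia A)]))
  | cut {c : Ctx} {A : Formula} : P A →
      DerivWith P (c.fill [.fml A]) → DerivWith P (c.fill [.fml A.negate]) →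
      DerivWith P (c.fill [])
  | exch {Γ Δ : Sequent} : SeqEquiv Γ Δ → DerivWith P Γ → DerivWith P Δ

/-- Cut-free derivability. -/
abbrev Deriv : Sequent → Prop := DerivWith (fun _ => False)
/-- Elements of an annotated nested sequent: ordinary formulas, diamond
formulas `◇A_Σ` annotated with a finite set of formulas, and brackets
`[Δ]_B` annotated with a formula. -/
inductive AElem : Type where
  | fml : Formula → AElem
  | dia : Formula → Finset Formula → AElem
  | nest : Formula → List AElem → AElem

/-- Annotated nested sequents. -/
abbrev ASeq := List AElem

/-- Annotated unary contexts. -/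
inductive ACtx : Type where
  | hole : ASeq → ACtx
  | nest : Formula → ASeq → ACtx → ACtx

def ACtx.fill : ACtx → ASeq → ASeq
  | .hole Δ, Γ => Δ ++ Γ
  | .nest B Δ c, Γ => .nest B (c.fill Γ) :: Δ

/-- Formula occurrence as an annotated element: a diamond formula carries the
annotation set `s`, any other formula is unannotated. -/
def emb (A : Formula) (s : Finset Formula) : AElem :=
  match A with
  | .dia C => .dia C s
  | _ => .fml A

mutual
/-- All diamond annotation sets in the element are empty. -/
def AElem.diaEmpty : AElem → Prop
  | .fml _ => True
  | .dia _ s => s = ∅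
  | .nest _ Δ => ASeq.diaEmpty Δ
/-- All diamond annotation sets in the sequent are empty. -/
def ASeq.diaEmpty : ASeq → Prop
  | [] => True
  | e :: Δ => e.diaEmpty ∧ ASeq.diaEmpty Δ
end

mutual
/-- The element contains no bracket annotated with `B`. -/
def AElem.noBr (B : Formula) : AElem → Prop
  | .fml _ => True
  | .dia _ _ => True
  | .nest C Δ => C ≠ B ∧ ASeq.noBr B Δ
/-- The sequent contains no bracket annotated with `B`. -/
def ASeq.noBr (B : Formula) : ASeq → Prop
  | [] => True
  | e :: Δ => e.noBr B ∧ ASeq.noBr B Δ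
end

mutual
/-- The operation `(−)⁺`: weaken every bracket `[Δ']_C` to `[Δ'⁺, ◇C⊥]_C`. -/
def AElem.plus : AElem → AElem
  | .fml A => .fml A
  | .dia A s => .dia A s
  | .nest C Δ => .nest C (AElem.dia C.negate ∅ :: ASeq.plus Δ)
def ASeq.plus : ASeq → ASeq
  | [] => []
  | e :: Δ => e.plus :: ASeq.plus Δ
end

mutual
/-- Erase all annotations. -/
def AElem.erase : AElem → SeqElem
  | .fml A => .fml A
  | .dia A _ => .fml (.dia A)
  | .nest _ Δ => .nest (ASeq.erase Δ)
def ASeq.erase : ASeq → Sequent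
  | [] => []
  | e :: Δ => e.erase :: ASeq.erase Δ
end

/-- Equivalence of annotated sequents up to (deep) exchange. -/
inductive AEquiv : ASeq → ASeq → Prop where
  | nil : AEquiv [] []
  | cons {e : AElem} {Γ Δ : ASeq} : AEquiv Γ Δ → AEquiv (e :: Γ) (e :: Δ)
  | consNest {B : Formula} {Γ' Δ' Γ Δ : ASeq} :
      AEquiv Γ' Δ' → AEquiv Γ Δ → AEquiv (.nest B Γ' :: Γ) (.nest B Δ' :: Δ)
  | swap (a b : AElem) (Γ : ASeq) : AEquiv (a :: b :: Γ) (b :: a :: Γ)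
  | trans {Γ Δ Θ : ASeq} : AEquiv Γ Δ → AEquiv Δ Θ → AEquiv Γ Θ

/-- Merging two annotated sequents with the same underlying skeleton and
identical bracket annotations: diamond annotation sets are unioned. -/
inductive AMerge : ASeq → ASeq → ASeq → Prop where
  | nil : AMerge [] [] []
  | fml {C : Formula} {Γ₁ Γ₂ Γ : ASeq} :
      AMerge Γ₁ Γ₂ Γ → AMerge (.fml C :: Γ₁) (.fml C :: Γ₂) (.fml C :: Γ)
  | dia {A : Formula} {s₁ s₂ : Finset Formula} {Γ₁ Γ₂ Γ : ASeq} :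
      AMerge Γ₁ Γ₂ Γ →
      AMerge (.dia A s₁ :: Γ₁) (.dia A s₂ :: Γ₂) (.dia A (s₁ ∪ s₂) :: Γ)
  | nest {B : Formula} {Δ₁ Δ₂ Δ Γ₁ Γ₂ Γ : ASeq} :
      AMerge Δ₁ Δ₂ Δ → AMerge Γ₁ Γ₂ Γ →
      AMerge (.nest B Δ₁ :: Γ₁) (.nest B Δ₂ :: Γ₂) (.nest B Δ :: Γ)

/-- Merging two annotated contexts. -/
inductive ACtxMerge : ACtx → ACtx → ACtx → Prop where
  | hole {Δ₁ Δ₂ Δ : ASeq} : AMerge Δ₁ Δ₂ Δ →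
      ACtxMerge (.hole Δ₁) (.hole Δ₂) (.hole Δ)
  | nest {B : Formula} {Δ₁ Δ₂ Δ : ASeq} {c₁ c₂ c : ACtx} :
      AMerge Δ₁ Δ₂ Δ → ACtxMerge c₁ c₂ c →
      ACtxMerge (.nest B Δ₁ c₁) (.nest B Δ₂ c₂) (.nest B Δ c)

/-- Annotated derivability, with cut permitted on formulas satisfying `P`. -/
inductive ADeriv (P : Formula → Prop) : ASeq → Prop where
  | id {c : ACtx} {a : ℕ} :
      ASeq.diaEmpty (c.fill [.fml (.pos a), .fml (.neg a)]) →
      ADeriv P (c.fill [.fml (.pos a), .fml (.neg a)])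
  | and {c₁ c₂ c : ACtx} {A B : Formula} {s₁ s₂ : Finset Formula} :
      ACtxMerge c₁ c₂ c →
      ADeriv P (c₁.fill [emb A s₁]) → ADeriv P (c₂.fill [emb B s₂]) →
      ADeriv P (c.fill [.fml (.and A B)])
  | or {c : ACtx} {A B : Formula} {s₁ s₂ : Finset Formula} :
      ADeriv P (c.fill [emb A s₁, emb B s₂]) →
      ADeriv P (c.fill [.fml (.or A B)])
  | box {c : ACtx} {A : Formula} {S : Finset Formula} {s : Finset Formula} :
      ADeriv P (c.fill [.nest A [.dia A.negate S, emb A s]]) →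
      ADeriv P (c.fill [.fml (.box A)])
  | dia {c d : ACtx} {A B : Formula} {S s : Finset Formula} {Δ' : ASeq} :
      ADeriv P (c.fill (d.fill [.nest B (emb A s :: Δ')] ++ [.dia A S])) →
      ADeriv P (c.fill (d.fill [.nest B Δ'] ++ [.dia A (insert B S)]))
  | cut {c₁ c₂ c : ACtx} {A : Formula} {s₁ s₂ : Finset Formula} :
      P A → ACtxMerge c₁ c₂ c →
      ADeriv P (c₁.fill [emb A s₁]) → ADeriv P (c₂.fill [emb A.negate s₂]) →
      ADeriv P (c.fill [])
  | exch {Γ Δ : ASeq} : AEquiv Γ Δ → ADeriv P Γ → ADeriv P Δ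

/-- Deletion of one occurrence of `◇B_∅` anywhere in a sequent. -/
inductive Del (B : Formula) : ASeq → ASeq → Prop where
  | here {Γ : ASeq} : Del B (.dia B ∅ :: Γ) Γ
  | cons {e : AElem} {Γ Γ' : ASeq} : Del B Γ Γ' → Del B (e :: Γ) (e :: Γ')
  | nest {C : Formula} {Δ Δ' Γ : ASeq} :
      Del B Δ Δ' → Del B (.nest C Δ :: Γ) (.nest C Δ' :: Γ)

/-- Deletion of one occurrence of `◇B_∅` anywhere in a context. -/
inductive CDel (B : Formula) : ACtx → ACtx → Prop where
  | hole {Δ Δ' : ASeq} : Del B Δ Δ' → CDel B (.hole Δ) (.hole Δ')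
  | nestΔ {C : Formula} {Δ Δ' : ASeq} {c : ACtx} :
      Del B Δ Δ' → CDel B (.nest C Δ c) (.nest C Δ' c)
  | nestC {C : Formula} {Δ : ASeq} {c c' : ACtx} :
      CDel B c c' → CDel B (.nest C Δ c) (.nest C Δ c')

lemma Del.appL {B : Formula} {L L' : ASeq} (h : Del B L L') (M : ASeq) :
    Del B (L ++ M) (L' ++ M) := by
  induction h with
  | here => exact .here
  | cons _ ih => exact .cons ih
  | nest h => exact .nest h

lemma Del.appR {B : Formula} {M M' : ASeq} (L : ASeq) (h : Del B M M') :
    Del B (L ++ M) (L ++ M') := by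
  induction L with
  | nil => exact h
  | cons e L ih => exact .cons ih

lemma CDel.fill {B : Formula} {c c' : ACtx} (h : CDel B c c') (X : ASeq) :
    Del B (c.fill X) (c'.fill X) := by
  induction h with
  | hole h => exact h.appL X
  | nestΔ h => exact .cons h
  | nestC _ ih => exact .nest ih

lemma Del.fillC {B : Formula} {X X' : ASeq} (c : ACtx) (h : Del B X X') :
    Del B (c.fill X) (c.fill X') := by
  induction c with
  | hole Δ => exact h.appR Δ
  | nest C Δ d ih => exact .nest ih

lemma del_append {B : Formula} {L M Γ' : ASeq} (h : Del B (L ++ M) Γ') :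
    (∃ L', Del B L L' ∧ Γ' = L' ++ M) ∨ (∃ M', Del B M M' ∧ Γ' = L ++ M') := by
  induction L generalizing Γ' with
  | nil => exact .inr ⟨Γ', h, rfl⟩
  | cons e L ih =>
    cases h with
    | here => exact .inl ⟨L, .here, rfl⟩
    | cons h =>
      rcases ih h with ⟨L', h', rfl⟩ | ⟨M', h', rfl⟩
      · exact .inl ⟨e :: L', .cons h', rfl⟩
      · exact .inr ⟨M', h', rfl⟩
    | nest h => exact .inl ⟨_ :: L, .nest h, rfl⟩

lemma del_fill {B : Formula} {c : ACtx} {X Γ' : ASeq} (h : Del B (c.fill X) Γ') :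
    (∃ c', CDel B c c' ∧ Γ' = c'.fill X) ∨ (∃ X', Del B X X' ∧ Γ' = c.fill X') := by
  induction c generalizing Γ' with
  | hole Δ =>
    rcases del_append h with ⟨L', h', rfl⟩ | ⟨M', h', rfl⟩
    · exact .inl ⟨.hole L', .hole h', rfl⟩
    · exact .inr ⟨M', h', rfl⟩
  | nest C Δ d ih =>
    cases h with
    | cons h => exact .inl ⟨.nest C _ d, .nestΔ h, rfl⟩
    | nest h =>
      rcases ih h with ⟨c', hc, rfl⟩ | ⟨X', hx, rfl⟩
      · exact .inl ⟨.nest C Δ c', .nestC hc, rfl⟩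
      · exact .inr ⟨X', hx, rfl⟩

lemma Del.diaEmpty {B : Formula} {Γ Γ' : ASeq} (h : Del B Γ Γ')
    (hd : ASeq.diaEmpty Γ) : ASeq.diaEmpty Γ' := by
  induction h with
  | here => exact hd.2
  | cons _ ih => exact ⟨hd.1, ih hd.2⟩
  | nest _ ih => exact ⟨ih hd.1, hd.2⟩

lemma AMerge.del {B : Formula} {Γ₁ Γ₂ Γ Γ' : ASeq} (hm : AMerge Γ₁ Γ₂ Γ)
    (h : Del B Γ Γ') :
    ∃ Γ₁' Γ₂', Del B Γ₁ Γ₁' ∧ Del B Γ₂ Γ₂' ∧ AMerge Γ₁' Γ₂' Γ' := by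
  induction hm generalizing Γ' with
  | nil => cases h
  | fml _ ih =>
    cases h with
    | cons h =>
      obtain ⟨a, b, h1, h2, h3⟩ := ih h
      exact ⟨_, _, .cons h1, .cons h2, .fml h3⟩
  | @dia A s₁ s₂ Γ₁ Γ₂ Γ hm ih =>
    generalize hu : s₁ ∪ s₂ = u at h
    cases h with
    | here =>
      obtain ⟨rfl, rfl⟩ := Finset.union_eq_empty.mp hu
      exact ⟨Γ₁, Γ₂, .here, .here, hm⟩
    | cons h =>
      subst hu
      obtain ⟨a, b, h1, h2, h3⟩ := ih h
      exact ⟨_, _, .cons h1, .cons h2, .dia h3⟩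
  | nest hmΔ hmΓ ihΔ ihΓ =>
    cases h with
    | cons h =>
      obtain ⟨a, b, h1, h2, h3⟩ := ihΓ h
      exact ⟨_, _, .cons h1, .cons h2, .nest hmΔ h3⟩
    | nest h =>
      obtain ⟨a, b, h1, h2, h3⟩ := ihΔ h
      exact ⟨_, _, .nest h1, .nest h2, .nest h3 hmΓ⟩

lemma ACtxMerge.del {B : Formula} {c₁ c₂ c c' : ACtx} (hm : ACtxMerge c₁ c₂ c)
    (h : CDel B c c') :
    ∃ c₁' c₂', CDel B c₁ c₁' ∧ CDel B c₂ c₂' ∧ ACtxMerge c₁' c₂' c' := by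
  induction hm generalizing c' with
  | hole hm =>
    cases h with
    | hole h =>
      obtain ⟨a, b, h1, h2, h3⟩ := hm.del h
      exact ⟨_, _, .hole h1, .hole h2, .hole h3⟩
  | nest hmΔ hmc ih =>
    cases h with
    | nestΔ h =>
      obtain ⟨a, b, h1, h2, h3⟩ := hmΔ.del h
      exact ⟨_, _, .nestΔ h1, .nestΔ h2, .nest h3 hmc⟩
    | nestC h =>
      obtain ⟨a, b, h1, h2, h3⟩ := ih h
      exact ⟨_, _, .nestC h1, .nestC h2, .nest hmΔ h3⟩

lemma AEquiv.refl (Γ : ASeq) : AEquiv Γ Γ := by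
  induction Γ with
  | nil => exact .nil
  | cons e Γ ih => exact .cons ih

lemma AEquiv.del {Γ Δ : ASeq} (he : AEquiv Γ Δ) {B : Formula} {Δ₀ : ASeq}
    (h : Del B Δ Δ₀) : ∃ Γ₀, Del B Γ Γ₀ ∧ AEquiv Γ₀ Δ₀ := by
  induction he generalizing Δ₀ with
  | nil => cases h
  | @cons e Γ Δ he ih =>
    cases h with
    | here => exact ⟨Γ, .here, he⟩
    | cons h =>
      obtain ⟨Γ₀, h1, h2⟩ := ih h
      exact ⟨e :: Γ₀, .cons h1, .cons h2⟩
    | nest h =>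
      exact ⟨_, .nest h, .cons he⟩
  | @consNest C Γ' Δ' Γ Δ he1 he2 ih1 ih2 =>
    cases h with
    | cons h =>
      obtain ⟨Γ₀, h1, h2⟩ := ih2 h
      exact ⟨_, .cons h1, .consNest he1 h2⟩
    | nest h =>
      obtain ⟨Γ₀, h1, h2⟩ := ih1 h
      exact ⟨_, .nest h1, .consNest h2 he2⟩
  | @swap a b Γ =>
    cases h with
    | here => exact ⟨a :: Γ, .cons .here, AEquiv.refl _⟩
    | cons h =>
      cases h with
      | here => exact ⟨b :: Γ, .here, AEquiv.refl _⟩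
      | cons h => exact ⟨_, .cons (.cons h), .swap a b _⟩
      | nest h => exact ⟨_, .nest h, .swap _ b Γ⟩
    | nest h => exact ⟨_, .cons (.nest h), .swap a _ Γ⟩
  | trans he1 he2 ih1 ih2 =>
    obtain ⟨Γ₁, h1, h2⟩ := ih2 h
    obtain ⟨Γ₀, h3, h4⟩ := ih1 h1
    exact ⟨Γ₀, h3, .trans h4 h2⟩

lemma ADeriv.del {P : Formula → Prop} {B : Formula} {Γ : ASeq}
    (h : ADeriv P Γ) : ∀ {Γ'}, Del B Γ Γ' → ADeriv P Γ' := by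
  induction h with
  | id hd =>
    intro Γ' h
    rcases del_fill h with ⟨c', hc, rfl⟩ | ⟨X', hx, rfl⟩
    · exact .id ((hc.fill _).diaEmpty hd)
    · cases hx with
      | cons hx => cases hx with | cons hx => cases hx
  | and hm h1 h2 ih1 ih2 =>
    intro Γ' h
    rcases del_fill h with ⟨c', hc, rfl⟩ | ⟨X', hx, rfl⟩
    · obtain ⟨c₁', c₂', hc1, hc2, hm'⟩ := hm.del hc
      exact .and hm' (ih1 (hc1.fill _)) (ih2 (hc2.fill _))
    · cases hx with | cons hx => cases hx
  | or h ih =>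
    intro Γ' h
    rcases del_fill h with ⟨c', hc, rfl⟩ | ⟨X', hx, rfl⟩
    · exact .or (ih (hc.fill _))
    · cases hx with | cons hx => cases hx
  | box h ih =>
    intro Γ' h
    rcases del_fill h with ⟨c', hc, rfl⟩ | ⟨X', hx, rfl⟩
    · exact .box (ih (hc.fill _))
    · cases hx with | cons hx => cases hx
  | @dia c d A C S s Δ' h ih =>
    intro Γ' h
    rcases del_fill h with ⟨c', hc, rfl⟩ | ⟨X', hx, rfl⟩
    · exact .dia (ih (hc.fill _))
    · rcases del_append hx with ⟨L', hL, rfl⟩ | ⟨M', hM, rfl⟩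
      · rcases del_fill hL with ⟨d', hd, rfl⟩ | ⟨Y', hY, rfl⟩
        · exact .dia (ih (Del.fillC c ((hd.fill _).appL _)))
        · cases hY with
          | cons hY => cases hY
          | nest hY =>
            exact .dia (ih (Del.fillC c
              ((Del.fillC d (.nest (.cons hY))).appL _)))
      · generalize hu : insert C S = u at hM
        cases hM with
        | here => exact absurd hu (Finset.insert_ne_empty _ _)
        | cons hM => cases hM
  | cut hp hm h1 h2 ih1 ih2 =>
    intro Γ' h
    rcases del_fill h with ⟨c', hc, rfl⟩ | ⟨X', hx, rfl⟩
    · obtain ⟨c₁', c₂', hc1, hc2, hm'⟩ := hm.del hc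
      exact .cut hp hm' (ih1 (hc1.fill _)) (ih2 (hc2.fill _))
    · cases hx
  | exch he h ih =>
    intro Γ' hd
    obtain ⟨Γ₀, h1, h2⟩ := he.del hd
    exact .exch h2 (ih h1)

/-- thinning — an occurrence of `◇A⊥` with empty annotation set
can be deleted. -/
theorem thinning (A : Formula) (c : ACtx)
    (h : ADeriv (· = A) (c.fill [.dia A.negate ∅])) :
    ADeriv (· = A) (c.fill []) := by
  exact h.del (Del.fillC c Del.here)
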